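/- If a join semilattice S is not o-modular, then S contains a semi-strong sub join-semilattice isomorphic to either M_2 or M_4. -/

import Mathlib

/-!
If o-modularity fails at `c ≤ a` and `b`, pick `x₀ ∈ L(a, b ⊔ c)` and an upper bound `u` of
`L(a, b) ∪ {c}` with `x₀ ≰ u`, and put `x = x₀ ⊔ c`. Every common lower bound of `x` and `b` lies
below `u` while `x` does not, which forces `c < x < b ⊔ c`, `b < b ⊔ c` and `b` incomparable with
both `c` and `x`: so `{c, x, b, b ⊔ c}` is a copy of `M₂`, closed under joins. If `x` and `b` have
no common lower bound in `S`, this copy is semi-strong. Otherwise, for a common lower bound `z`,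
the same argument with `c` replaced by `z ⊔ c` gives a copy of `M₂` to which `z` adds a bottom;
the resulting copy of `M₄` is semi-strong because it has a least element.
-/

variable {α : Type*}

/-- The set of common lower bounds of `a` and `b` within `X`. -/
def L2 [Preorder α] (X : Set α) (a b : α) : Set α := {x ∈ X | x ≤ a ∧ x ≤ b}

/-- `T` is a sub join-semilattice: a subset closed under join. -/
def IsSubJoinSemilattice [SemilatticeSup α] (T : Set α) : Prop :=
  ∀ a ∈ T, ∀ b ∈ T, a ⊔ b ∈ T

/-- `T` is semi-strong in `S`. -/
def SemiStrong [SemilatticeSup α] (T : Set α) : Prop :=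
  ∀ a ∈ T, ∀ b ∈ T, L2 T a b = ∅ → L2 Set.univ a b = ∅

/-- `T` is strong in `S`. -/
def Strong [SemilatticeSup α] (T : Set α) : Prop :=
  ∀ a ∈ T, ∀ b ∈ T, L2 Set.univ a b ⊆ L2 T a b

/-- o-modularity of a join semilattice. -/
def OModular (α : Type*) [SemilatticeSup α] : Prop :=
  ∀ a b c : α, c ≤ a →
    lowerBounds {a, b ⊔ c} ⊆ lowerBounds (upperBounds (lowerBounds {a, b} ∪ {c}))

/-- `T` is (the underlying set of) a copy of `M₂`, the pentagon minus its bottom. -/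
def IsM2 [SemilatticeSup α] (T : Set α) : Prop :=
  ∃ a u b t : α, T = {a, u, b, t} ∧ a < u ∧ u < t ∧ b < t ∧
    ¬ a ≤ b ∧ ¬ b ≤ a ∧ ¬ u ≤ b ∧ ¬ b ≤ u ∧ a ⊔ b = t ∧ u ⊔ b = t

/-- `T` is (the underlying set of) a copy of `M₄`, the pentagon. -/
def IsM4 [SemilatticeSup α] (T : Set α) : Prop :=
  ∃ v a u b t : α, T = {v, a, u, b, t} ∧ v < a ∧ a < u ∧ u < t ∧ v < b ∧ b < t ∧
    ¬ a ≤ b ∧ ¬ b ≤ a ∧ ¬ u ≤ b ∧ ¬ b ≤ u ∧ a ⊔ b = t ∧ u ⊔ b = t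

section SemilatticeSup

variable [SemilatticeSup α]

theorem IsSubJoinSemilattice.insert_of_mem_lowerBounds {T : Set α} {v : α}
    (hT : IsSubJoinSemilattice T) (hv : v ∈ lowerBounds T) :
    IsSubJoinSemilattice (insert v T) := by
  rintro p (rfl | hp) q (rfl | hq)
  · simp
  · simp [sup_eq_right.2 (hv hq), hq]
  · simp [sup_eq_left.2 (hv hp), hp]
  · exact Set.mem_insert_of_mem _ (hT p hp q hq)

theorem isSubJoinSemilattice_of_sup_eq {a u b t : α} (hau : a ≤ u) (hut : u ≤ t) (hbt : b ≤ t)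
    (hab : a ⊔ b = t) (hub : u ⊔ b = t) : IsSubJoinSemilattice ({a, u, b, t} : Set α) := by
  have hba : b ⊔ a = t := sup_comm b a ▸ hab
  have hbu : b ⊔ u = t := sup_comm b u ▸ hub
  intro p hp q hq
  simp only [Set.mem_insert_iff, Set.mem_singleton_iff] at hp hq ⊢
  rcases hp with rfl | rfl | rfl | rfl <;> rcases hq with rfl | rfl | rfl | rfl <;>
    simp [hau, hut, hbt, hau.trans hut, hab, hub, hba, hbu]

theorem IsM2.isSubJoinSemilattice {T : Set α} (hT : IsM2 T) : IsSubJoinSemilattice T := by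
  obtain ⟨a, u, b, t, rfl, hau, hut, hbt, -, -, -, -, hab, hub⟩ := hT
  exact isSubJoinSemilattice_of_sup_eq hau.le hut.le hbt.le hab hub

theorem IsM4.isSubJoinSemilattice {T : Set α} (hT : IsM4 T) : IsSubJoinSemilattice T := by
  obtain ⟨v, a, u, b, t, rfl, hva, hau, hut, hvb, hbt, -, -, -, -, hab, hub⟩ := hT
  refine (isSubJoinSemilattice_of_sup_eq hau.le hut.le hbt.le hab hub).insert_of_mem_lowerBounds ?_
  have hvu : v ≤ u := hva.le.trans hau.le
  simp [hva.le, hvu, hvb.le, hvu.trans hut.le]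

theorem IsLeast.semiStrong {T : Set α} {v : α} (hv : IsLeast T v) : SemiStrong T := by
  intro p hp q hq hpq
  have : v ∈ L2 T p q := ⟨hv.1, hv.2 hp, hv.2 hq⟩
  simp [hpq] at this

theorem IsM4.semiStrong {T : Set α} (hT : IsM4 T) : SemiStrong T := by
  obtain ⟨v, a, u, b, t, rfl, hva, hau, hut, hvb, hbt, -⟩ := hT
  refine IsLeast.semiStrong (v := v) ⟨by simp, ?_⟩
  have hvu : v ≤ u := hva.le.trans hau.le
  simp [hva.le, hvu, hvb.le, hvu.trans hut.le]

theorem semiStrong_of_forall_le_or_le_or_eq_empty {T : Set α}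
    (h : ∀ p ∈ T, ∀ q ∈ T, p ≤ q ∨ q ≤ p ∨ L2 Set.univ p q = ∅) : SemiStrong T := by
  intro p hp q hq hpq
  rcases h p hp q hq with hle | hle | hempty
  · have : p ∈ L2 T p q := ⟨hp, le_rfl, hle⟩
    simp [hpq] at this
  · have : q ∈ L2 T p q := ⟨hq, hle, le_rfl⟩
    simp [hpq] at this
  · exact hempty

theorem L2_univ_eq_empty_of_le {p q x b : α} (hxb : ∀ w, w ≤ x → ¬ w ≤ b) (hp : p ≤ x)
    (hq : q ≤ b) : L2 Set.univ p q = ∅ ∧ L2 Set.univ q p = ∅ := by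
  constructor <;>
  · refine Set.eq_empty_of_forall_notMem fun w ⟨_, hw₁, hw₂⟩ => ?_
    first
    | exact hxb w (hw₁.trans hp) (hw₂.trans hq)
    | exact hxb w (hw₂.trans hp) (hw₁.trans hq)

theorem semiStrong_of_forall_not_le {a u b t : α} (hau : a ≤ u) (hut : u ≤ t) (hbt : b ≤ t)
    (hdisj : ∀ w, w ≤ u → ¬ w ≤ b) : SemiStrong ({a, u, b, t} : Set α) := by
  obtain ⟨hab_empty, hba_empty⟩ := L2_univ_eq_empty_of_le hdisj hau le_rfl
  obtain ⟨hub_empty, hbu_empty⟩ := L2_univ_eq_empty_of_le hdisj le_rfl le_rfl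
  refine semiStrong_of_forall_le_or_le_or_eq_empty fun p hp q hq => ?_
  simp only [Set.mem_insert_iff, Set.mem_singleton_iff] at hp hq
  rcases hp with rfl | rfl | rfl | rfl <;> rcases hq with rfl | rfl | rfl | rfl <;>
    simp [hau, hut, hbt, hau.trans hut, hab_empty, hba_empty, hub_empty, hbu_empty]

-- What remains of a failure of o-modularity at `c ≤ a`: `a` can be dropped since `x ≤ a`.
structure NonOModularWitness (b c x u : α) : Prop where
  le_left : c ≤ x
  le_sup : x ≤ b ⊔ c
  le_bound : c ≤ u
  not_le_bound : ¬ x ≤ u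
  lowerBound_le_bound : ∀ w, w ≤ x → w ≤ b → w ≤ u

theorem exists_nonOModularWitness (h : ¬ OModular α) :
    ∃ b c x u : α, NonOModularWitness b c x u := by
  simp only [OModular, not_forall, Set.not_subset] at h
  obtain ⟨a, b, c, hca, x₀, hx₀, hx₀u⟩ := h
  have hx₀a : x₀ ≤ a := hx₀ (by simp)
  have hx₀bc : x₀ ≤ b ⊔ c := hx₀ (by simp)
  simp only [mem_lowerBounds, upperBounds_union, upperBounds_singleton, Set.mem_inter_iff,
    Set.mem_Ici, not_forall] at hx₀u
  obtain ⟨u, ⟨hLu, hcu⟩, hx₀u⟩ := hx₀u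
  refine ⟨b, c, x₀ ⊔ c, u, le_sup_right, sup_le hx₀bc le_sup_right, hcu,
    fun h => hx₀u (le_sup_left.trans h), fun w hwx hwb => hLu ?_⟩
  simp [lowerBounds_insert, hwb, hwx.trans (sup_le hx₀a hca)]

namespace NonOModularWitness

variable {b c x u : α} (hw : NonOModularWitness b c x u)
include hw

theorem not_le_right : ¬ x ≤ b :=
  fun h => hw.not_le_bound (hw.lowerBound_le_bound x le_rfl h)

theorem not_right_le : ¬ b ≤ x := fun h =>
  hw.not_le_bound (hw.le_sup.trans (sup_le (hw.lowerBound_le_bound b h le_rfl) hw.le_bound))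

theorem not_left_le_right : ¬ c ≤ b :=
  fun h => hw.not_le_right (hw.le_sup.trans (sup_le le_rfl h))

theorem not_right_le_left : ¬ b ≤ c :=
  fun h => hw.not_right_le (h.trans hw.le_left)

theorem sup_right_eq : x ⊔ b = b ⊔ c :=
  le_antisymm (sup_le hw.le_sup le_sup_left) (sup_le le_sup_right (hw.le_left.trans le_sup_left))

theorem left_lt : c < x :=
  hw.le_left.lt_of_not_ge fun h => hw.not_le_bound (h.trans hw.le_bound)

theorem lt_sup : x < b ⊔ c :=
  hw.le_sup.lt_of_not_ge fun h => hw.not_right_le (le_sup_left.trans h)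

theorem right_lt_sup : b < b ⊔ c :=
  le_sup_left.lt_of_not_ge fun h => hw.not_left_le_right (le_sup_right.trans h)

theorem isM2 : IsM2 ({c, x, b, b ⊔ c} : Set α) :=
  ⟨c, x, b, b ⊔ c, rfl, hw.left_lt, hw.lt_sup, hw.right_lt_sup, hw.not_left_le_right,
    hw.not_right_le_left, hw.not_le_right, hw.not_right_le, sup_comm c b, hw.sup_right_eq⟩

theorem sup_left_of_le {z : α} (hzx : z ≤ x) (hzb : z ≤ b) :
    NonOModularWitness b (z ⊔ c) x u where
  le_left := sup_le hzx hw.le_left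
  le_sup := hw.le_sup.trans (sup_le_sup_left le_sup_right b)
  le_bound := sup_le (hw.lowerBound_le_bound z hzx hzb) hw.le_bound
  not_le_bound := hw.not_le_bound
  lowerBound_le_bound := hw.lowerBound_le_bound

theorem isM4 {z : α} (hzx : z ≤ x) (hzb : z ≤ b) :
    IsM4 ({z, z ⊔ c, x, b, b ⊔ (z ⊔ c)} : Set α) := by
  have hw' := hw.sup_left_of_le hzx hzb
  exact ⟨z, z ⊔ c, x, b, b ⊔ (z ⊔ c), rfl,
    le_sup_left.lt_of_not_ge fun h => hw'.not_left_le_right (h.trans hzb), hw'.left_lt,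
    hw'.lt_sup, hzb.lt_of_not_ge fun h => hw.not_right_le (h.trans hzx), hw'.right_lt_sup,
    hw'.not_left_le_right, hw'.not_right_le_left, hw.not_le_right, hw.not_right_le, sup_comm _ b,
    hw'.sup_right_eq⟩

end NonOModularWitness

end SemilatticeSup

theorem not_oModular_contains_semiStrong_M2_or_M4 [SemilatticeSup α]
    (h : ¬ OModular α) :
    ∃ T : Set α, IsSubJoinSemilattice T ∧ SemiStrong T ∧ (IsM2 T ∨ IsM4 T) := by
  obtain ⟨b, c, x, u, hw⟩ := exists_nonOModularWitness h
  by_cases hz : ∃ z, z ≤ x ∧ z ≤ b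
  · obtain ⟨z, hzx, hzb⟩ := hz
    have hM4 := hw.isM4 hzx hzb
    exact ⟨_, hM4.isSubJoinSemilattice, hM4.semiStrong, Or.inr hM4⟩
  · push Not at hz
    have hM2 := hw.isM2
    exact ⟨_, hM2.isSubJoinSemilattice,
      semiStrong_of_forall_not_le hw.le_left hw.le_sup le_sup_left hz, Or.inl hM2⟩
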